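/- arXiv:2104.01637 — 3 statements merged into one kernel-verified Lean document; each statement's English description precedes it below -/
import Mathlib

section
/- Let a, b, c, m, e be real numbers with a + m < 0, am − bc > 0, b ≠ 0, and e² < 2(a+m)(bc−am)/(m² + (am−bc)). Define V(x,y) = (am−bc)x² + (mx−by)² and let L be the differential generator of the Itô system dx = (ax+by)dt + ex dξ, dy = (cx+my)dt, so that LV(x,y) = (ax+by)·∂V/∂x + (cx+my)·∂V/∂y + (1/2)e²x²·∂²V/∂x². Then LV(x,y) ≤ 0 for all (x,y) ∈ ℝ², with LV(x,y) < 0 whenever x ≠ 0. -/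
/-!
The off-diagonal terms of `LV` cancel, so `LV(x, y) = K x²` with
`K = 2 (a + m)(am - bc) + e² (m² + am - bc)`, and the bound on `e²` says exactly `K < 0`.
-/

noncomputable def V1 (a b c m : ℝ) : ℝ → ℝ → ℝ :=
  fun x y => (a * m - b * c) * x ^ 2 + (m * x - b * y) ^ 2

noncomputable def LV1 (a b c m e : ℝ) (x y : ℝ) : ℝ :=
  (a * x + b * y) * deriv (fun x' => V1 a b c m x' y) x
    + (c * x + m * y) * deriv (fun y' => V1 a b c m x y') y
    + (1 / 2) * e ^ 2 * x ^ 2 * deriv (deriv (fun x' => V1 a b c m x' y)) x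

section Derivatives

variable (a b c m : ℝ)

theorem hasDerivAt_V1_fst (x y : ℝ) :
    HasDerivAt (fun x' => V1 a b c m x' y)
      (2 * (a * m - b * c) * x + 2 * m * (m * x - b * y)) x :=
  (((hasDerivAt_pow 2 x).const_mul (a * m - b * c)).add
    ((((hasDerivAt_id' x).const_mul m).sub_const (b * y)).pow 2)).congr_deriv (by ring)

theorem hasDerivAt_V1_snd (x y : ℝ) :
    HasDerivAt (fun y' => V1 a b c m x y') (-2 * b * (m * x - b * y)) y :=
  (((((hasDerivAt_id' y).const_mul b).const_sub (m * x)).pow 2).const_add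
    ((a * m - b * c) * x ^ 2)).congr_deriv (by ring)

theorem deriv_V1_fst (y : ℝ) :
    deriv (fun x' => V1 a b c m x' y)
      = fun x => 2 * (a * m - b * c) * x + 2 * m * (m * x - b * y) :=
  funext fun x => (hasDerivAt_V1_fst a b c m x y).deriv

theorem deriv_deriv_V1_fst (x y : ℝ) :
    deriv (deriv (fun x' => V1 a b c m x' y)) x = 2 * (a * m - b * c) + 2 * m ^ 2 := by
  rw [deriv_V1_fst]
  exact ((((hasDerivAt_id' x).const_mul (2 * (a * m - b * c))).add
    ((((hasDerivAt_id' x).const_mul m).sub_const (b * y)).const_mul (2 * m))).congr_deriv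
      (by ring)).deriv

end Derivatives

theorem LV1_eq (a b c m e x y : ℝ) :
    LV1 a b c m e x y
      = (2 * (a + m) * (a * m - b * c) + e ^ 2 * (m ^ 2 + (a * m - b * c))) * x ^ 2 := by
  rw [LV1, (hasDerivAt_V1_fst a b c m x y).deriv, (hasDerivAt_V1_snd a b c m x y).deriv,
    deriv_deriv_V1_fst]
  ring

theorem LV1_coeff_neg (a b c m e : ℝ) (h2 : a * m - b * c > 0)
    (h4 : e ^ 2 < 2 * (a + m) * (b * c - a * m) / (m ^ 2 + (a * m - b * c))) :
    2 * (a + m) * (a * m - b * c) + e ^ 2 * (m ^ 2 + (a * m - b * c)) < 0 := by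
  have h4' := (lt_div_iff₀ (by positivity)).mp h4
  linarith

theorem stmt_1_general (a b c m e : ℝ) (h2 : a * m - b * c > 0)
    (h4 : e ^ 2 < 2 * (a + m) * (b * c - a * m) / (m ^ 2 + (a * m - b * c))) :
    (∀ x y : ℝ, LV1 a b c m e x y ≤ 0) ∧
    (∀ x y : ℝ, x ≠ 0 → LV1 a b c m e x y < 0) := by
  have hK := LV1_coeff_neg a b c m e h2 h4
  refine ⟨fun x y => ?_, fun x y hx => ?_⟩ <;> rw [LV1_eq]
  · exact mul_nonpos_of_nonpos_of_nonneg hK.le (sq_nonneg x)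
  · exact mul_neg_of_neg_of_pos hK (by positivity)

theorem stmt_1 (a b c m e : ℝ) (h1 : a + m < 0) (h2 : a * m - b * c > 0) (h3 : b ≠ 0)
    (h4 : e ^ 2 < 2 * (a + m) * (b * c - a * m) / (m ^ 2 + (a * m - b * c))) :
    (∀ x y : ℝ, LV1 a b c m e x y ≤ 0) ∧
    (∀ x y : ℝ, x ≠ 0 → LV1 a b c m e x y < 0) :=
  stmt_1_general a b c m e h2 h4
end

section
/- Let a, b, c, m, f ∈ ℝ with a+m < 0 and am − bc > 0. Then the quadratic form V(x,y) = [c² + m² + (am−bc)]x² + 2[ac + bm − c f²/2]xy + [a² + b² + (am−bc) − (a+m)f²/2]y² is positive definite on ℝ², provided f² < (−p + √(p² + c²q))/c² when c ≠ 0, where p = (a+m)(c²+m²+am−bc) − 2c(ac+bm) and q = 4(am−bc)[(a+m)²+(b−c)²]; when c = 0 it is positive definite for all f. -/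
/-!
A binary quadratic form is positive definite once its leading coefficient and its determinant
are positive. Here the leading coefficient is `c² + m² + (am − bc) > 0`, and with `t = f²` the
determinant is `(q − 2pt − c²t²)/4`. For `c = 0` this is `q − 2pt` with `p = (a+m)(m² + am) < 0`;
for `c ≠ 0` it is a concave quadratic in `t`, equal to `q > 0` at `t = 0`, whose positive root is
exactly the bound imposed on `f²`.
-/

theorem quadForm_pos_of_det_pos {A B C : ℝ} (hA : 0 < A) (hD : 0 < A * C - B ^ 2) {x y : ℝ}
    (hxy : (x, y) ≠ (0, 0)) : 0 < A * x ^ 2 + 2 * B * x * y + C * y ^ 2 := by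
  rcases eq_or_ne y 0 with rfl | hy
  · have hx : x ≠ 0 := by simpa using hxy
    have : 0 < x ^ 2 := by positivity
    nlinarith
  · have hy2 : 0 < y ^ 2 := by positivity
    -- `A · form = (Ax + By)² + (AC − B²) y²`
    nlinarith [sq_nonneg (A * x + B * y), mul_pos hD hy2]

theorem quadratic_neg_of_lt_pos_root {k p q t : ℝ} (hk : 0 < k) (hq : 0 < q) (ht : 0 ≤ t)
    (hlt : t < (-p + √(p ^ 2 + k * q)) / k) : k * t ^ 2 + 2 * p * t - q < 0 := by
  set s := √(p ^ 2 + k * q)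
  have hs : s ^ 2 = p ^ 2 + k * q := Real.sq_sqrt (by positivity)
  have hp_lt : |p| < s := by
    rw [← Real.sqrt_sq_eq_abs]
    exact Real.sqrt_lt_sqrt (sq_nonneg p) (by nlinarith)
  have hupper : k * t + p < s := by
    have := (lt_div_iff₀ hk).mp hlt
    linarith
  have hlower : -s < k * t + p := by
    nlinarith [neg_abs_le p, mul_nonneg hk.le ht]
  have hsq : (k * t + p) ^ 2 < s ^ 2 := sq_lt_sq' hlower hupper
  have hfactor : k * (k * t ^ 2 + 2 * p * t - q) = (k * t + p) ^ 2 - s ^ 2 := by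
    rw [hs]; ring
  have : k * (k * t ^ 2 + 2 * p * t - q) < 0 := by linarith
  exact neg_of_mul_neg_right this hk.le

theorem stmt_6 (a b c m f : ℝ) (h1 : a + m < 0) (h2 : a * m - b * c > 0)
    (hf : c ≠ 0 →
      f ^ 2 < (-( (a + m) * (c ^ 2 + m ^ 2 + a * m - b * c) - 2 * c * (a * c + b * m))
          + Real.sqrt (((a + m) * (c ^ 2 + m ^ 2 + a * m - b * c) - 2 * c * (a * c + b * m)) ^ 2
            + c ^ 2 * (4 * (a * m - b * c) * ((a + m) ^ 2 + (b - c) ^ 2)))) / c ^ 2) :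
    ∀ x y : ℝ, (x, y) ≠ (0, 0) →
      (c ^ 2 + m ^ 2 + (a * m - b * c)) * x ^ 2
        + 2 * (a * c + b * m - c * f ^ 2 / 2) * x * y
        + (a ^ 2 + b ^ 2 + (a * m - b * c) - (a + m) * f ^ 2 / 2) * y ^ 2 > 0 := by
  intro x y hxy
  set p := (a + m) * (c ^ 2 + m ^ 2 + a * m - b * c) - 2 * c * (a * c + b * m) with hp
  set q := 4 * (a * m - b * c) * ((a + m) ^ 2 + (b - c) ^ 2) with hq
  have hq_pos : 0 < q := by
    have : 0 < (a + m) ^ 2 + (b - c) ^ 2 := by nlinarith [sq_nonneg (b - c)]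
    exact mul_pos (mul_pos four_pos h2) this
  have hdisc : c ^ 2 * (f ^ 2) ^ 2 + 2 * p * f ^ 2 - q < 0 := by
    rcases eq_or_ne c 0 with hc | hc
    · have hp_neg : p < 0 := by
        have ham : 0 < m ^ 2 + a * m := by rw [hc] at h2; nlinarith [sq_nonneg m]
        have hp0 : p = (a + m) * (m ^ 2 + a * m) := by rw [hp, hc]; ring
        rw [hp0]
        exact mul_neg_of_neg_of_pos h1 ham
      rw [hc]
      nlinarith [mul_nonneg (neg_nonneg.mpr hp_neg.le) (sq_nonneg f)]
    · exact quadratic_neg_of_lt_pos_root (by positivity) hq_pos (sq_nonneg f) (hf hc)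
  refine quadForm_pos_of_det_pos (by nlinarith [sq_nonneg c, sq_nonneg m]) ?_ hxy
  have hdet : (c ^ 2 + m ^ 2 + (a * m - b * c))
        * (a ^ 2 + b ^ 2 + (a * m - b * c) - (a + m) * f ^ 2 / 2)
        - (a * c + b * m - c * f ^ 2 / 2) ^ 2
      = (q - 2 * p * f ^ 2 - c ^ 2 * (f ^ 2) ^ 2) / 4 := by
    rw [hp, hq]; ring
  rw [hdet]
  linarith
end

section
/- Let k > 0 and ω ≠ 0 be real, and σ ∈ ℝ with σ² < 2kω²/(ω²+1). Define V(x,y) = (1/(2[σ²(ω²+1) − 2kω²]))·{2[(ω²+1)σ² − ω⁴ − ω² − k²]x² − 4kxy − 2(ω²+1)y²}. Then V is positive definite on ℝ². -/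
/-!
Up to the factor `-1 / D` with `D = σ²(ω²+1) - 2kω² < 0`, the form is
`Q = A x² + 2k xy + (ω²+1) y²` with `A = ω⁴ + ω² + k² - (ω²+1)σ²`, so it suffices that `Q` is
positive definite, i.e. that `k² < A (ω²+1)`. Multiplying `σ²(ω²+1) < 2kω²` by `ω²+1` gives
`A (ω²+1) - k² > ω² (ω² + 1 - k)² ≥ 0`.
-/

theorem quadratic_form_pos_of_sq_lt_mul {a b c x y : ℝ} (hc : 0 < c) (hdisc : b ^ 2 < a * c)
    (hxy : (x, y) ≠ (0, 0)) : 0 < a * x ^ 2 + 2 * b * x * y + c * y ^ 2 := by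
  rcases eq_or_ne x 0 with rfl | hx
  · have hy : y ≠ 0 := fun hy => hxy (by rw [hy])
    simpa using mul_pos hc (sq_pos_of_ne_zero hy)
  · have hcQ : 0 < c * (a * x ^ 2 + 2 * b * x * y + c * y ^ 2) :=
      calc 0 < (a * c - b ^ 2) * x ^ 2 := mul_pos (sub_pos.2 hdisc) (sq_pos_of_ne_zero hx)
        _ ≤ (b * x + c * y) ^ 2 + (a * c - b ^ 2) * x ^ 2 := le_add_of_nonneg_left (sq_nonneg _)
        _ = c * (a * x ^ 2 + 2 * b * x * y + c * y ^ 2) := by ring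
    exact pos_of_mul_pos_right hcQ hc.le

theorem sq_lt_oscillator_coeff_mul {k ω σ : ℝ} (hσ : σ ^ 2 * (ω ^ 2 + 1) < 2 * k * ω ^ 2) :
    k ^ 2 < (ω ^ 4 + ω ^ 2 + k ^ 2 - (ω ^ 2 + 1) * σ ^ 2) * (ω ^ 2 + 1) := by
  have hB : (0 : ℝ) < ω ^ 2 + 1 := by positivity
  nlinarith [mul_lt_mul_of_pos_right hσ hB, mul_nonneg (sq_nonneg ω) (sq_nonneg (ω ^ 2 + 1 - k))]

theorem stmt_10_general (k ω σ : ℝ)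
    (hσ : σ ^ 2 < 2 * k * ω ^ 2 / (ω ^ 2 + 1)) :
    ∀ x y : ℝ, (x, y) ≠ (0, 0) →
      (1 / (2 * (σ ^ 2 * (ω ^ 2 + 1) - 2 * k * ω ^ 2))) *
        (2 * ((ω ^ 2 + 1) * σ ^ 2 - ω ^ 4 - ω ^ 2 - k ^ 2) * x ^ 2
          - 4 * k * x * y - 2 * (ω ^ 2 + 1) * y ^ 2) > 0 := by
  intro x y hxy
  have hB : (0 : ℝ) < ω ^ 2 + 1 := by positivity
  have hD : σ ^ 2 * (ω ^ 2 + 1) < 2 * k * ω ^ 2 := (lt_div_iff₀ hB).1 hσ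
  have hQ := quadratic_form_pos_of_sq_lt_mul hB (sq_lt_oscillator_coeff_mul hD) hxy
  have hnum : 2 * ((ω ^ 2 + 1) * σ ^ 2 - ω ^ 4 - ω ^ 2 - k ^ 2) * x ^ 2
      - 4 * k * x * y - 2 * (ω ^ 2 + 1) * y ^ 2
      = -2 * ((ω ^ 4 + ω ^ 2 + k ^ 2 - (ω ^ 2 + 1) * σ ^ 2) * x ^ 2 + 2 * k * x * y
          + (ω ^ 2 + 1) * y ^ 2) := by ring
  rw [hnum]
  exact mul_pos_of_neg_of_neg (one_div_neg.2 (by linarith)) (by linarith)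

theorem stmt_10 (k ω σ : ℝ) (hk : k > 0) (hω : ω ≠ 0)
    (hσ : σ ^ 2 < 2 * k * ω ^ 2 / (ω ^ 2 + 1)) :
    ∀ x y : ℝ, (x, y) ≠ (0, 0) →
      (1 / (2 * (σ ^ 2 * (ω ^ 2 + 1) - 2 * k * ω ^ 2))) *
        (2 * ((ω ^ 2 + 1) * σ ^ 2 - ω ^ 4 - ω ^ 2 - k ^ 2) * x ^ 2
          - 4 * k * x * y - 2 * (ω ^ 2 + 1) * y ^ 2) > 0 :=
  stmt_10_general k ω σ hσ
end
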